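/- For every integer L ≥ 1, every K ∈ {1,…,L} and every ε > 0, the smoothed top-sum function topsum_{K,ε} : ℝ^L → ℝ defined by topsum_{K,ε}(s) = E[topsum_K(s + εZ)] is well defined (the integrand is integrable for every s) and is √K-Lipschitz with respect to the Euclidean norm. -/

import Mathlib

open MeasureTheory ProbabilityTheory

/-- The list of coordinates of `s : ℝ^L` sorted in decreasing order. -/
noncomputable def descSort {L : ℕ} (s : Fin L → ℝ) : List ℝ :=
  (Multiset.sort (Multiset.map s Finset.univ.val) (· ≤ ·)).reverse

/-- `kthLargest K s` is the `K`-th largest coordinate of `s` (1-indexed), i.e. `s_(K)`. -/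
noncomputable def kthLargest {L : ℕ} (K : ℕ) (s : Fin L → ℝ) : ℝ :=
  (descSort s).getD (K - 1) 0

/-- `topsum K s` is the sum of the `K` largest coordinates of `s`,
with the convention `topsum 0 s = 0`. -/
noncomputable def topsum {L : ℕ} (K : ℕ) (s : Fin L → ℝ) : ℝ :=
  ((descSort s).take K).sum

/-- The standard Gaussian measure `N(0, Id_L)` on `ℝ^L`:
the coordinates are i.i.d. standard normal random variables. -/
noncomputable def stdGaussian (L : ℕ) : Measure (EuclideanSpace ℝ (Fin L)) :=
  (Measure.pi (fun _ : Fin L => gaussianReal 0 1)).map (MeasurableEquiv.toLp 2 (Fin L → ℝ))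

/-- The smoothed top-sum `topsumSm K ε s = E[topsum K (s + ε Z)]`, `Z ∼ N(0, Id_L)`. -/
noncomputable def topsumSm {L : ℕ} (K : ℕ) (ε : ℝ) (s : EuclideanSpace ℝ (Fin L)) : ℝ :=
  ∫ z, topsum K (s + ε • z) ∂(stdGaussian L)

/-- The smoothed top-K operator `topSm K ε s = topsumSm K ε s - topsumSm (K-1) ε s`. -/
noncomputable def topSm {L : ℕ} (K : ℕ) (ε : ℝ) (s : EuclideanSpace ℝ (Fin L)) : ℝ :=
  topsumSm K ε s - topsumSm (K - 1) ε s

/-- The 0/1 vector whose entries equal 1 exactly at the `K` coordinates carrying the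
`K` largest values of `v` (well defined when the `K`-th and `(K+1)`-th largest values
of `v` are distinct). -/
noncomputable def argtops {L : ℕ} (K : ℕ) (v : Fin L → ℝ) : Fin L → ℝ :=
  fun i => if kthLargest K v ≤ v i then 1 else 0

/-!
Choosing the `K` largest coordinates of `s` realises `topsum K s` as the largest of the sums
`∑ i ∈ A, s i` over `K`-element sets `A`, so for two points `s, t`, with `A` optimal for `s`,
`topsum K s - topsum K t ≤ ∑ i ∈ A, (s - t) i ≤ √K ‖s - t‖` by Cauchy–Schwarz.
A `√K`-Lipschitz function grows at most linearly, and a Gaussian vector has a finite first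
moment, so `topsum K (s + ε Z)` is integrable; averaging the pointwise Lipschitz bound over `Z`
gives the Lipschitz bound for the smoothed top-sum.
-/

open Finset

theorem Finset.sum_le_sum_of_card_eq_of_forall_le {ι M : Type*} [DecidableEq ι]
    [AddCommMonoid M] [LinearOrder M] [IsOrderedAddMonoid M] {f : ι → M} {A B : Finset ι}
    (hcard : #A = #B) (hB : ∀ i ∈ B, ∀ j ∉ B, f j ≤ f i) :
    ∑ i ∈ A, f i ≤ ∑ i ∈ B, f i := by
  rw [← sum_inter_add_sum_sdiff A B, ← sum_inter_add_sum_sdiff B A, inter_comm B A]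
  gcongr _ + ?_
  have hsdiff : #(A \ B) = #(B \ A) := card_sdiff_comm hcard
  obtain hBA | hBA := (B \ A).eq_empty_or_nonempty
  · rw [hBA, card_empty, card_eq_zero] at hsdiff
    rw [hBA, hsdiff]
  -- every value on `A \ B` lies below the least value on `B \ A`
  calc ∑ j ∈ A \ B, f j ≤ #(A \ B) • (B \ A).inf' hBA f :=
        sum_le_card_nsmul _ _ _ fun j hj => (le_inf'_iff _ _).2 fun i hi =>
          hB i (mem_sdiff.1 hi).1 j (mem_sdiff.1 hj).2
    _ = #(B \ A) • (B \ A).inf' hBA f := by rw [hsdiff]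
    _ ≤ ∑ i ∈ B \ A, f i := card_nsmul_le_sum _ _ _ fun i hi => inf'_le _ hi

theorem EuclideanSpace.sum_le_sqrt_card_mul_norm {ι : Type*} [Fintype ι]
    (A : Finset ι) (d : EuclideanSpace ℝ ι) : ∑ i ∈ A, d i ≤ √(#A : ℝ) * ‖d‖ := by
  have hsq : ∑ i ∈ A, d i ^ 2 ≤ ‖d‖ ^ 2 := by
    rw [EuclideanSpace.real_norm_sq_eq]
    exact sum_le_sum_of_subset_of_nonneg (subset_univ A) fun i _ _ => sq_nonneg (d i)
  calc ∑ i ∈ A, d i ≤ |∑ i ∈ A, d i| := le_abs_self _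
    _ ≤ √(#A * ∑ i ∈ A, d i ^ 2) := Real.abs_le_sqrt (sq_sum_le_card_mul_sum_sq ..)
    _ ≤ √(#A * ‖d‖ ^ 2) := by gcongr
    _ = √(#A : ℝ) * ‖d‖ := by
        rw [Real.sqrt_mul (Nat.cast_nonneg _), Real.sqrt_sq (norm_nonneg d)]

theorem exists_perm_antitone_comp {α : Type*} [LinearOrder α] {L : ℕ} (s : Fin L → α) :
    ∃ σ : Equiv.Perm (Fin L), Antitone (s ∘ σ) :=
  ⟨Fin.revPerm.trans (Tuple.sort s),
    (Tuple.monotone_sort s).comp_antitone fun _ _ => Fin.rev_le_rev.2⟩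

theorem descSort_eq_ofFn {L : ℕ} {s : Fin L → ℝ} {σ : Equiv.Perm (Fin L)}
    (hσ : Antitone (s ∘ σ)) : descSort s = List.ofFn (s ∘ σ) := by
  refine List.Perm.eq_of_sortedGE (Multiset.pairwise_sort _ _).sortedLE.reverse
    hσ.sortedGE_ofFn ((List.reverse_perm _).trans ?_)
  rw [← Multiset.coe_eq_coe, Multiset.sort_eq, Fin.univ_val_map, Multiset.coe_eq_coe]
  exact (σ.ofFn_comp_perm s).symm

theorem exists_topsum_eq_sum {L K : ℕ} (hKL : K ≤ L) (s : Fin L → ℝ) :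
    ∃ A : Finset (Fin L), #A = K ∧ (∀ i ∈ A, ∀ j ∉ A, s j ≤ s i) ∧
      topsum K s = ∑ i ∈ A, s i := by
  obtain ⟨σ, hσ⟩ := exists_perm_antitone_comp s
  refine ⟨({k | k < K} : Finset (Fin L)).map σ.toEmbedding, ?_, ?_, ?_⟩
  · rw [card_map, Fin.card_filter_val_lt, min_eq_right hKL]
  · simp only [mem_map, mem_filter, mem_univ, true_and, Equiv.coe_toEmbedding]
    rintro _ ⟨k, hk, rfl⟩ j hj
    obtain ⟨l, rfl⟩ := σ.surjective j
    exact hσ (Fin.le_def.2 (by grind))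
  · rw [topsum, descSort_eq_ofFn hσ, List.sum_take_ofFn, sum_map]
    rfl

theorem sum_le_topsum {L K : ℕ} (hKL : K ≤ L) (s : Fin L → ℝ) {A : Finset (Fin L)}
    (hA : #A = K) : ∑ i ∈ A, s i ≤ topsum K s := by
  obtain ⟨B, hB, hBtop, hsum⟩ := exists_topsum_eq_sum hKL s
  exact hsum ▸ sum_le_sum_of_card_eq_of_forall_le (hA.trans hB.symm) hBtop

theorem lipschitzWith_topsum {L K : ℕ} (hKL : K ≤ L) :
    LipschitzWith (Real.toNNReal √K) (fun s : EuclideanSpace ℝ (Fin L) => topsum K s) := by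
  refine LipschitzWith.of_le_add_mul' _ fun s t => ?_
  obtain ⟨A, hA, -, hs⟩ := exists_topsum_eq_sum hKL s
  calc topsum K s = ∑ i ∈ A, t i + ∑ i ∈ A, (s - t) i := by
        rw [hs, ← sum_add_distrib]; simp
    _ ≤ topsum K t + √K * dist s t := by
        have hCS := EuclideanSpace.sum_le_sqrt_card_mul_norm A (s - t)
        rw [hA, ← dist_eq_norm] at hCS
        gcongr
        exact sum_le_topsum hKL t hA

theorem LipschitzWith.integrable_comp {α E F : Type*} [MeasurableSpace α] {μ : Measure α}
    [IsFiniteMeasure μ] [NormedAddCommGroup E] [NormedAddCommGroup F] {K : NNReal} {g : E → F}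
    (hg : LipschitzWith K g) {f : α → E} (hf : Integrable f μ) : Integrable (g ∘ f) μ := by
  refine Integrable.mono' ((integrable_const ‖g 0‖).add (hf.norm.const_mul K))
    (hg.continuous.comp_aestronglyMeasurable hf.1) (Filter.Eventually.of_forall fun x => ?_)
  have hgf := hg.norm_sub_le (f x) 0
  rw [sub_zero] at hgf
  simp only [Function.comp_apply, Pi.add_apply]
  linarith [norm_le_norm_add_norm_sub' (g (f x)) (g 0)]

theorem LipschitzWith.integral {X Ω : Type*} [PseudoMetricSpace X] [MeasurableSpace Ω]
    {μ : Measure Ω} [IsProbabilityMeasure μ] {F : X → Ω → ℝ} {C : NNReal}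
    (hint : ∀ x, Integrable (F x) μ) (hF : ∀ ω, LipschitzWith C (F · ω)) :
    LipschitzWith C (fun x => ∫ ω, F x ω ∂μ) := by
  refine LipschitzWith.of_le_add_mul C fun x y => ?_
  calc ∫ ω, F x ω ∂μ ≤ ∫ ω, (F y ω + C * dist x y) ∂μ :=
        integral_mono (hint x) ((hint y).add (integrable_const _)) fun ω => (hF ω).le_add_mul x y
    _ = ∫ ω, F y ω ∂μ + C * dist x y := by
        rw [integral_add (hint y) (integrable_const _), integral_const, probReal_univ, one_smul]

theorem stdGaussian_eq_probabilityTheory_stdGaussian (L : ℕ) :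
    _root_.stdGaussian L = ProbabilityTheory.stdGaussian (EuclideanSpace ℝ (Fin L)) :=
  map_pi_eq_stdGaussian

instance (L : ℕ) : IsGaussian (_root_.stdGaussian L) := by
  rw [stdGaussian_eq_probabilityTheory_stdGaussian]
  infer_instance

theorem topsumSm_integrable_and_lipschitz_general (L K : ℕ) (hKL : K ≤ L) (ε : ℝ) :
    (∀ s : EuclideanSpace ℝ (Fin L),
      Integrable (fun z : EuclideanSpace ℝ (Fin L) => topsum K (s + ε • z)) (stdGaussian L)) ∧
    LipschitzWith (Real.toNNReal (Real.sqrt K))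
      (fun s : EuclideanSpace ℝ (Fin L) => topsumSm K ε s) := by
  have hint (s : EuclideanSpace ℝ (Fin L)) :
      Integrable (fun z : EuclideanSpace ℝ (Fin L) => topsum K (s + ε • z)) (stdGaussian L) :=
    (lipschitzWith_topsum hKL).integrable_comp
      ((integrable_const s).add (Integrable.smul ε IsGaussian.integrable_id))
  refine ⟨hint, LipschitzWith.integral hint fun z => ?_⟩
  have hshift :=
    (lipschitzWith_topsum hKL).comp (IsometryEquiv.addRight (ε • z)).isometry.lipschitz
  rwa [mul_one] at hshift

/-- the smoothed top-sum `topsumSm K ε s = E[topsum K (s + ε Z)]` is well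
defined (the integrand is integrable for every `s`) and `√K`-Lipschitz. -/
theorem topsumSm_integrable_and_lipschitz (L K : ℕ) (hL : 1 ≤ L) (hK1 : 1 ≤ K) (hKL : K ≤ L)
    (ε : ℝ) (hε : 0 < ε) :
    (∀ s : EuclideanSpace ℝ (Fin L),
      Integrable (fun z : EuclideanSpace ℝ (Fin L) => topsum K (s + ε • z)) (stdGaussian L)) ∧
    LipschitzWith (Real.toNNReal (Real.sqrt K))
      (fun s : EuclideanSpace ℝ (Fin L) => topsumSm K ε s) :=
  topsumSm_integrable_and_lipschitz_general L K hKL ε
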